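/- Let Q be a finite acyclic quiver and R a quasi-Frobenius ring. If M ∈ Rep(Q,R) is a representation such that M_j is a projective (equivalently injective) R-module for every vertex j ∈ Q_0, then M has injective dimension at most 1 in Rep(Q,R): there exists a short exact sequence 0 → M → I⁰ → I¹ → 0 in Rep(Q,R) with I⁰ and I¹ injective objects of Rep(Q,R). (Applied to the regular representation, this says that the path algebra RQ is a 1-Gorenstein ring.) -/

import Mathlib

open CategoryTheory CategoryTheory.Limits

/-- An `R`-linear map factors through a projective `R`-module. -/
def FactorsThroughProjective (R : Type) [Ring R] {M N : Type} [AddCommGroup M] [Module R M]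
    [AddCommGroup N] [Module R N] (f : M →ₗ[R] N) : Prop :=
  ∃ (P : Type) (_ : AddCommGroup P) (_ : Module R P) (_ : Module.Projective R P)
    (a : M →ₗ[R] P) (b : P →ₗ[R] N), b ∘ₗ a = f

/-- An `R`-linear map is a stable equivalence if it becomes an isomorphism in the stable
module category: there is `g` in the other direction such that `g ∘ f - id` and `f ∘ g - id`
each factor through a projective module. -/
def IsStableEquiv (R : Type) [Ring R] {M N : Type} [AddCommGroup M] [Module R M]
    [AddCommGroup N] [Module R N] (f : M →ₗ[R] N) : Prop :=
  ∃ g : N →ₗ[R] M,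
    FactorsThroughProjective R (g ∘ₗ f - LinearMap.id) ∧
    FactorsThroughProjective R (f ∘ₗ g - LinearMap.id)

/-- A quasi-Frobenius ring: left and right Noetherian, and injective over itself
as a left and as a right module. -/
class IsQuasiFrobenius (R : Type) [Ring R] : Prop where
  noetherian_left : IsNoetherianRing R
  noetherian_right : IsNoetherianRing Rᵐᵒᵖ
  selfInjective_left : Module.Injective R R
  selfInjective_right : Module.Injective Rᵐᵒᵖ Rᵐᵒᵖ

/-- The category of representations of a quiver `V` over a ring `R`:
functors from the free path category on `V` to `R`-modules. -/
abbrev QuivRep (R : Type) [Ring R] (V : Type) [Quiver.{1} V] : Type _ :=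
  Paths V ⥤ ModuleCat.{0} R

namespace QuivRep

variable {R : Type} [Ring R] {V : Type} [Quiver.{1} V]

/-- The `R`-module of a representation at a vertex `j`. -/
abbrev vtx (M : QuivRep R V) (j : V) : ModuleCat R := M.obj ((Paths.of V).obj j)

/-- The structure map of a representation along an arrow `a : i ⟶ j`. -/
abbrev arrowMap (M : QuivRep R V) {i j : V} (a : i ⟶ j) : M.vtx i ⟶ M.vtx j :=
  M.map ((Paths.of V).map a)

/-- The component at a vertex `j` of a morphism of representations. -/
abbrev app {M N : QuivRep R V} (f : M ⟶ N) (j : V) : ↥(M.vtx j) →ₗ[R] ↥(N.vtx j) := (f.app ((Paths.of V).obj j)).hom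

/-- A representation is monic if, at each vertex `j`, the natural map
`⊕_{a : i ⟶ j} M_i → M_j`, `(x_a) ↦ Σ_a m_a (x_a)`, is injective. -/
def IsMonic (M : QuivRep R V) : Prop :=
  ∀ j : V,
    letI : DecidableEq (Σ i : V, i ⟶ j) := Classical.decEq _
    Function.Injective
      (DirectSum.toModule R (Σ i : V, i ⟶ j) (M.vtx j)
        (fun a => ((M.arrowMap a.2).hom : ↥(M.vtx a.1) →ₗ[R] ↥(M.vtx j))))

/-- A representation is RI-fibrant if, at each vertex `j`, the natural map
`M_j → ∏_{a : j ⟶ i} M_i`, `x ↦ (m_a x)_a`, is surjective. -/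
def IsRIFibrant (M : QuivRep R V) : Prop :=
  ∀ j : V,
    Function.Surjective
      (LinearMap.pi
        (fun a : Σ i : V, (j ⟶ i) => ((M.arrowMap a.2).hom : ↥(M.vtx j) →ₗ[R] ↥(M.vtx a.1))))

end QuivRep

/-- A quiver is finite and acyclic: finitely many vertices and arrows, and the only
paths from a vertex to itself are trivial. -/
def IsFiniteAcyclic (V : Type) [Quiver.{1} V] : Prop :=
  Nonempty (Fintype V) ∧ (∀ i j : V, Nonempty (Fintype (i ⟶ j))) ∧
    ∀ (i : V) (p : Quiver.Path i i), p.length = 0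

/-!
A representation `M` of a quiver embeds into the coinduced representation
`c ↦ ∏_{p : c → i} M_i`, and the cokernel of this embedding is the coinduced representation of
`i ↦ ∏_{α : i → i'} M_{i'}`, via `x ↦ (α (x_p) - x_{pα})_{p, α}`. Exactness in the middle and
surjectivity hold because the path category is free: a family can be built, or shown to come from
`M`, by recursion along paths. Coinduction is right adjoint to the exact restriction to vertices,
so coinducing injective modules gives injective representations. Finally, over a quasi-Frobenius
ring a projective module is a summand of a free module, and free modules are injective since
direct sums of injectives are injective over a Noetherian ring.
-/

universe u v

theorem Module.Injective.of_retract {R : Type*} [Ring R] {P N : Type u} [AddCommGroup P]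
    [Module R P] [AddCommGroup N] [Module R N] [Module.Injective R N] (i : P →ₗ[R] N)
    (r : N →ₗ[R] P) (hri : r ∘ₗ i = LinearMap.id) : Module.Injective R P where
  out _ _ _ _ _ _ f hf g := by
    obtain ⟨h, hh⟩ := Module.Injective.out f hf (i ∘ₗ g)
    exact ⟨r ∘ₗ h, fun x => by simp [hh, ← LinearMap.comp_apply r i, hri]⟩

instance Module.Injective.finsupp {R : Type u} [Ring R] [IsNoetherianRing R] {ι N : Type u}
    [AddCommGroup N] [Module R N] [Module.Injective R N] : Module.Injective R (ι →₀ N) := by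
  classical
  refine Module.Baer.injective fun I g => ?_
  -- `I` is finitely generated, so `g` lands in the finitely many coordinates `S`.
  obtain ⟨T, hT⟩ : (LinearMap.range g).FG := by
    rw [LinearMap.range_eq_map]
    exact (IsNoetherian.noetherian ⊤).map g
  set S : Set ι := ↑(T.biUnion fun t => t.support)
  have hrange (x : I) : g x ∈ Finsupp.supported N R S := by
    refine (show LinearMap.range g ≤ _ from ?_) ⟨x, rfl⟩
    rw [← hT, Submodule.span_le]
    exact fun t ht => (Finsupp.mem_supported R t).2
      (Finset.coe_subset.2 (Finset.subset_biUnion_of_mem (fun t : ι →₀ N => t.support) ht))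
  let e := (Finsupp.supportedEquivFinsupp S).trans (Finsupp.linearEquivFunOnFinite R N S)
  have : Module.Injective R (Finsupp.supported N R S) :=
    Module.Injective.of_retract e.toLinearMap e.symm.toLinearMap (by ext; simp)
  obtain ⟨G, hG⟩ := Module.Baer.of_injective this I (g.codRestrict _ hrange)
  exact ⟨(Finsupp.supported N R S).subtype ∘ₗ G, fun x hx => congrArg Subtype.val (hG x hx)⟩

theorem IsQuasiFrobenius.injective_of_projective {R : Type} [Ring R] [IsQuasiFrobenius R]
    {P : Type} [AddCommGroup P] [Module R P] [Module.Projective R P] : Module.Injective R P := by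
  have := IsQuasiFrobenius.noetherian_left (R := R)
  have := IsQuasiFrobenius.selfInjective_left (R := R)
  obtain ⟨s, hs⟩ := Module.projective_def'.1 ‹Module.Projective R P›
  exact Module.Injective.of_retract s (Finsupp.linearCombination R id) hs

theorem CategoryTheory.ShortComplex.shortExact_of_evaluation {C D : Type*} [Category C]
    [Category D] [Abelian D] {S : ShortComplex (C ⥤ D)}
    (h : ∀ c, (S.map ((evaluation C D).obj c)).ShortExact) : S.ShortExact := by
  refine .mk' ?_ ((NatTrans.mono_iff_mono_app _).2 fun c => (h c).mono_f)
    ((NatTrans.epi_iff_epi_app _).2 fun c => (h c).epi_g)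
  rw [exact_iff_isZero_homology]
  exact Functor.isZero _ fun c => (S.mapHomologyIso ((evaluation C D).obj c)).symm.isZero_iff.2
    ((exact_iff_isZero_homology _).1 (h c).exact)

namespace ModuleCat

variable {R : Type} [Ring R] {C : Type} [Category.{v} C] [LocallySmall.{0} C]

noncomputable def coind (E : C → ModuleCat.{0} R) : C ⥤ ModuleCat.{0} R where
  obj c := ModuleCat.of R (∀ d, Shrink.{0} (c ⟶ d) → E d)
  map g := ModuleCat.ofHom
    { toFun := fun x d f => x d (equivShrink _ (g ≫ (equivShrink _).symm f))
      map_add' := fun _ _ => rfl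
      map_smul' := fun _ _ => rfl }
  map_id c := by
    ext x d f
    change x d (equivShrink _ (𝟙 c ≫ (equivShrink _).symm f)) = x d f
    simp
  map_comp g g' := by
    ext x d f
    change x d (equivShrink _ ((g ≫ g') ≫ _)) =
      x d (equivShrink _ (g ≫ (equivShrink _).symm (equivShrink _ (g' ≫ _))))
    simp

variable {E : C → ModuleCat.{0} R} {A : C ⥤ ModuleCat.{0} R}

variable (E) in
noncomputable def coindProj {c d : C} (f : c ⟶ d) : (coind E).obj c ⟶ E d :=
  ModuleCat.ofHom
    { toFun := fun x => x d (equivShrink _ f)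
      map_add' := fun _ _ => rfl
      map_smul' := fun _ _ => rfl }

theorem coindProj_apply {c d : C} (f : c ⟶ d) (x : (coind E).obj c) :
    coindProj E f x = x d (equivShrink _ f) :=
  rfl

theorem coind_ext {c : C} {x y : (coind E).obj c}
    (h : ∀ d (f : c ⟶ d), coindProj E f x = coindProj E f y) : x = y := by
  funext d s
  simpa [coindProj_apply] using h d ((equivShrink _).symm s)

@[simp]
theorem coindProj_map {c c' d : C} (g : c ⟶ c') (f : c' ⟶ d) (x : (coind E).obj c) :
    coindProj E f ((coind E).map g x) = coindProj E (g ≫ f) x := by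
  change x d (equivShrink _ (g ≫ (equivShrink _).symm (equivShrink _ f))) = _
  simp [coindProj_apply]

noncomputable def coindLift (φ : ∀ c, A.obj c ⟶ E c) : A ⟶ coind E where
  app c := ModuleCat.ofHom
    { toFun := fun x d f => φ d (A.map ((equivShrink _).symm f) x)
      map_add' := fun x y => by funext d f; simp
      map_smul' := fun r x => by funext d f; simp }
  naturality c c' g := by
    ext x
    funext d s
    change φ d (A.map ((equivShrink _).symm s) (A.map g x)) =
      φ d (A.map ((equivShrink _).symm (equivShrink _ (g ≫ (equivShrink _).symm s))) x)
    simp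

@[simp]
theorem coindProj_coindLift (φ : ∀ c, A.obj c ⟶ E c) {c d : C} (f : c ⟶ d) (x : A.obj c) :
    coindProj E f ((coindLift φ).app c x) = φ d (A.map f x) := by
  change φ d (A.map ((equivShrink _).symm (equivShrink _ f)) x) = _
  simp

theorem coindProj_app (g : A ⟶ coind E) {c d : C} (f : c ⟶ d) (x : A.obj c) :
    coindProj E f (g.app c x) = coindProj E (𝟙 d) (g.app d (A.map f x)) := by
  rw [NatTrans.naturality_apply, coindProj_map, Category.comp_id]

theorem coind_hom_ext {g g' : A ⟶ coind E}
    (h : ∀ c, g.app c ≫ coindProj E (𝟙 c) = g'.app c ≫ coindProj E (𝟙 c)) : g = g' := by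
  ext c x
  refine coind_ext fun d f => ?_
  rw [coindProj_app g, coindProj_app g']
  exact congrArg (fun φ => φ.hom (A.map f x)) (h d)

theorem injective_coind (hE : ∀ c, Module.Injective R (E c)) : Injective (coind E) := by
  refine ⟨fun {A B} g f hf => ?_⟩
  have hf_app c : Function.Injective (f.app c) :=
    (ModuleCat.mono_iff_injective _).1 ((NatTrans.mono_iff_mono_app f).1 hf c)
  choose ext hext using fun c => Module.Injective.extension_property R _ _ _ (f.app c).hom
    (hf_app c) (g.app c ≫ coindProj E (𝟙 c)).hom
  refine ⟨coindLift fun c => ModuleCat.ofHom (ext c), coind_hom_ext fun c => ?_⟩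
  ext x
  simpa [← coindProj_apply] using congrArg (· x) (hext c)

end ModuleCat

namespace Quiver

variable {V : Type u} [Quiver.{v} V] [∀ a b : V, Small.{u} (a ⟶ b)]

inductive ShrunkPath (a : V) : V → Type u
  | nil : ShrunkPath a a
  | cons {b c : V} : ShrunkPath a b → Shrink.{u} (b ⟶ c) → ShrunkPath a c

noncomputable def Path.toShrunkPath {a : V} : ∀ {b : V}, Path a b → ShrunkPath a b
  | _, .nil => .nil
  | _, .cons p e => .cons p.toShrunkPath (equivShrink _ e)

noncomputable def ShrunkPath.toPath {a : V} : ∀ {b : V}, ShrunkPath a b → Path a b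
  | _, .nil => .nil
  | _, .cons p e => .cons p.toPath ((equivShrink _).symm e)

noncomputable def Path.equivShrunkPath (a b : V) : Path a b ≃ ShrunkPath a b where
  toFun := Path.toShrunkPath
  invFun := ShrunkPath.toPath
  left_inv p := by
    induction p with
    | nil => rfl
    | cons p e ih => simp [Path.toShrunkPath, ShrunkPath.toPath, ih]
  right_inv p := by
    induction p with
    | nil => rfl
    | cons p e ih => simp [Path.toShrunkPath, ShrunkPath.toPath, ih]

instance Path.small (a b : V) : Small.{u} (Path a b) :=
  ⟨⟨_, ⟨Path.equivShrunkPath a b⟩⟩⟩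

end Quiver

instance CategoryTheory.Paths.locallySmall {V : Type u} [Quiver.{v} V]
    [∀ a b : V, Small.{u} (a ⟶ b)] : LocallySmall.{u} (Paths V) :=
  ⟨fun a b => Quiver.Path.small (V := V) a b⟩

namespace QuivRep

open ModuleCat

variable {R : Type} [Ring R] {V : Type} [Quiver.{1} V] [∀ a b : V, Small.{0} (a ⟶ b)]
  (M : QuivRep R V)

-- Stated on `Paths V` (a type synonym of `V`) so that it can be coinduced.
def outArrows : Paths V → ModuleCat.{0} R :=
  fun i : V => ModuleCat.of R (∀ j : V, Shrink.{0} (i ⟶ j) → M.vtx j)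

theorem outArrows_ext {i : V} {y z : outArrows M ((Paths.of V).obj i)}
    (h : ∀ (j : V) (α : i ⟶ j),
      y j (equivShrink (i ⟶ j) α) = z j (equivShrink (i ⟶ j) α)) :
    y = z := by
  funext j s
  obtain ⟨α, rfl⟩ := (equivShrink (i ⟶ j)).surjective s
  exact h j α

theorem coind_ext_of_vertices {E : Paths V → ModuleCat.{0} R} {c : Paths V}
    {x y : (coind E).obj c}
    (h : ∀ (i : V) (p : c ⟶ (Paths.of V).obj i), coindProj E p x = coindProj E p y) : x = y :=
  coind_ext fun d f => h d f

noncomputable def toCoind : M ⟶ coind M.obj := coindLift fun _ => 𝟙 _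

@[simp]
theorem coindProj_toCoind {c d : Paths V} (f : c ⟶ d) (x : M.obj c) :
    coindProj M.obj f ((toCoind M).app c x) = M.map f x := by
  simp [toCoind]

noncomputable def differentialAt (i : V) :
    (coind M.obj).obj ((Paths.of V).obj i) ⟶ outArrows M i :=
  ofHom <| LinearMap.pi fun j => LinearMap.pi fun s =>
    (M.arrowMap ((equivShrink (i ⟶ j)).symm s)).hom ∘ₗ (coindProj M.obj (𝟙 _)).hom -
      (coindProj M.obj ((Paths.of V).map ((equivShrink (i ⟶ j)).symm s))).hom

theorem differentialAt_apply {i j : V} (x : (coind M.obj).obj ((Paths.of V).obj i))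
    (s : Shrink.{0} (i ⟶ j)) :
    differentialAt M i x j s =
      M.arrowMap ((equivShrink (i ⟶ j)).symm s) (coindProj M.obj (𝟙 _) x) -
        coindProj M.obj ((Paths.of V).map ((equivShrink (i ⟶ j)).symm s)) x :=
  rfl

noncomputable def coindDifferential : coind M.obj ⟶ coind (outArrows M) :=
  coindLift fun i => differentialAt M i

theorem coindDifferential_apply {c : Paths V} {i j : V} (p : c ⟶ (Paths.of V).obj i)
    (α : i ⟶ j) (x : (coind M.obj).obj c) :
    coindProj (outArrows M) p ((coindDifferential M).app c x) j (equivShrink (i ⟶ j) α) =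
      M.arrowMap α (coindProj M.obj p x) - coindProj M.obj (p ≫ (Paths.of V).map α) x := by
  have h := congrArg (fun y => y j (equivShrink (i ⟶ j) α))
    (coindProj_coindLift (fun i : Paths V => differentialAt M i) p x)
  refine h.trans ((differentialAt_apply M ((coind M.obj).map p x) _).trans ?_)
  rw [Equiv.symm_apply_apply, coindProj_map, coindProj_map, Category.comp_id]

theorem toCoind_app_injective (c : Paths V) : Function.Injective ((toCoind M).app c) := by
  intro x y h
  simpa using congrArg (coindProj M.obj (𝟙 c)) h

theorem coindDifferential_app_toCoind (c : Paths V) (x : M.obj c) :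
    (coindDifferential M).app c ((toCoind M).app c x) = 0 := by
  refine coind_ext_of_vertices fun i p => outArrows_ext M fun j α => ?_
  rw [coindDifferential_apply, coindProj_toCoind, coindProj_toCoind, Functor.map_comp,
    CategoryTheory.comp_apply, map_zero]
  exact sub_self _

theorem coindProj_eq_map_of_coindDifferential_eq_zero {c : Paths V} {x : (coind M.obj).obj c}
    (hx : (coindDifferential M).app c x = 0) {d : Paths V} (f : c ⟶ d) :
    coindProj M.obj f x = M.map f (coindProj M.obj (𝟙 c) x) := by
  induction f using Paths.induction_fixed_source with
  | id => simp
  | comp p α ih =>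
    have h := coindDifferential_apply M p α x
    rw [hx, map_zero] at h
    rw [Functor.map_comp, CategoryTheory.comp_apply, ← ih]
    exact (sub_eq_zero.1 h.symm).symm

theorem exists_toCoind_eq_of_coindDifferential_eq_zero {c : Paths V} {x : (coind M.obj).obj c}
    (hx : (coindDifferential M).app c x = 0) : ∃ y, (toCoind M).app c y = x :=
  ⟨coindProj M.obj (𝟙 c) x, coind_ext fun d f => by
    rw [coindProj_toCoind, coindProj_eq_map_of_coindDifferential_eq_zero M hx f]⟩

noncomputable def differentialPreimage {c : V}
    (y : (coind (outArrows M)).obj ((Paths.of V).obj c)) : ∀ {i : V}, Quiver.Path c i → M.vtx i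
  | _, .nil => 0
  | _, .cons p α =>
    M.arrowMap α (differentialPreimage y p) - coindProj (outArrows M) p y _ (equivShrink _ α)

theorem coindDifferential_app_surjective (c : V) :
    Function.Surjective ((coindDifferential M).app ((Paths.of V).obj c)) := by
  intro y
  let x : (coind M.obj).obj ((Paths.of V).obj c) :=
    fun d s => differentialPreimage M y ((equivShrink ((Paths.of V).obj c ⟶ d)).symm s)
  have hx {i : V} (p : (Paths.of V).obj c ⟶ (Paths.of V).obj i) :
      coindProj M.obj p x = differentialPreimage M y p := by
    rw [coindProj_apply]
    simp only [x, Equiv.symm_apply_apply]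
    rfl
  refine ⟨x, coind_ext_of_vertices fun i p => outArrows_ext M fun j α => ?_⟩
  rw [coindDifferential_apply, hx, hx]
  exact sub_sub_cancel _ _

noncomputable def coindShortComplex : ShortComplex (QuivRep R V) :=
  ShortComplex.mk (toCoind M) (coindDifferential M) <| NatTrans.ext <| funext fun c =>
    ModuleCat.hom_ext <| LinearMap.ext fun x => coindDifferential_app_toCoind M c x

theorem coindShortComplex_shortExact : (coindShortComplex M).ShortExact :=
  ShortComplex.shortExact_of_evaluation fun c => ModuleCat.shortComplex_shortExact _
    (fun y => ⟨exists_toCoind_eq_of_coindDifferential_eq_zero M,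
      by rintro ⟨x, rfl⟩; exact coindDifferential_app_toCoind M c x⟩)
    (toCoind_app_injective M c) (coindDifferential_app_surjective M c)

end QuivRep

/-- Over a quasi-Frobenius ring and a finite acyclic quiver, a pointwise projective
representation has injective dimension at most one: it admits a short exact sequence
`0 → M → I⁰ → I¹ → 0` with `I⁰`, `I¹` injective objects. -/
theorem injdim_le_one_of_pointwise_projective
    (R : Type) [Ring R] [IsQuasiFrobenius R]
    {V : Type} [Quiver.{1} V] (hV : IsFiniteAcyclic V)
    (M : QuivRep R V) (hM : ∀ j : V, Module.Projective R ↥(M.vtx j)) :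
    ∃ (I₀ I₁ : QuivRep R V), Injective I₀ ∧ Injective I₁ ∧
      ∃ (a : M ⟶ I₀) (b : I₀ ⟶ I₁) (w : a ≫ b = 0),
        (ShortComplex.mk a b w).ShortExact := by
  have (i j : V) : Small.{0} (i ⟶ j) := by
    obtain ⟨_⟩ := hV.2.1 i j
    infer_instance
  have hinj (j : V) : Module.Injective R (M.vtx j) :=
    have := hM j
    IsQuasiFrobenius.injective_of_projective
  have hout (i : V) : Module.Injective R (QuivRep.outArrows M i) :=
    inferInstanceAs (Module.Injective R (∀ j : V, Shrink.{0} (i ⟶ j) → M.vtx j))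
  exact ⟨_, _, ModuleCat.injective_coind hinj, ModuleCat.injective_coind hout,
    _, _, _, QuivRep.coindShortComplex_shortExact M⟩
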